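/- arXiv:2310.18900 — 2 statements merged into one kernel-verified Lean document; each statement's English description precedes it below -/
import Mathlib

section
/- Let p ≥ d + 2 be an integer. Then 2^d − 1 + Σ_{l=2}^∞ ((l+1)^d − l^d)/(2l−1)^p ≤ 2^d − 1 + 1/(2(p−d−1)) ≤ 2^p. -/
/-!
Write `p = d + 1 + n` with `n ≥ 1` and index the series by `x = l + 2`. Since
`(x + 1)^d - x^d ≤ (x + 1)^d ≤ (2x - 1)^d`, the `x`-th term is at most `(2x - 1)^{-(n+1)}`.
A discrete version of `∫ₐ^{a+2} t^{-(n+1)} dt = (a^{-n} - (a+2)^{-n}) / n` bounds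
`(a + 2)^{-(n+1)}` by `(a^{-n} - (a+2)^{-n}) / (2n)`, so over odd `a` the series telescopes to at
most `1 / (2n)`. The second inequality is `1 / (2n) ≤ 1` and `2^d ≤ 2^p`.
-/

open Finset

lemma natCast_mul_mul_pow_le_mul_pow_sub_pow {R : Type*} [CommRing R] [LinearOrder R]
    [IsStrictOrderedRing R] {a h : R} (ha : 0 ≤ a) (hh : 0 ≤ h) (n : ℕ) :
    n * h * a ^ n ≤ (a + h) * ((a + h) ^ n - a ^ n) := by
  induction n with
  | zero => simp
  | succ n ih =>
    have hstep : (a + h) ^ (n + 1) - a ^ (n + 1)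
        = (a + h) * ((a + h) ^ n - a ^ n) + h * a ^ n := by ring
    rw [hstep, pow_succ]
    push_cast
    nlinarith [mul_le_mul_of_nonneg_left ih (by positivity : (0:R) ≤ a + h),
      mul_nonneg hh (by positivity : (0:R) ≤ n * h * a ^ n),
      mul_nonneg (mul_nonneg hh hh) (pow_nonneg ha n)]

lemma natCast_mul_div_pow_succ_le_one_div_pow_sub {K : Type*} [Field K] [LinearOrder K]
    [IsStrictOrderedRing K] {a h : K} (ha : 0 < a) (hh : 0 ≤ h) (n : ℕ) :
    n * h / (a + h) ^ (n + 1) ≤ 1 / a ^ n - 1 / (a + h) ^ n := by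
  have hah : 0 < a + h := by positivity
  rw [div_sub_div _ _ (by positivity) (by positivity),
    div_le_div_iff₀ (by positivity) (by positivity), pow_succ]
  nlinarith [mul_le_mul_of_nonneg_right (natCast_mul_mul_pow_le_mul_pow_sub_pow ha.le hh n)
    (pow_nonneg hah.le n)]

lemma sum_range_one_div_odd_pow_succ_le {n : ℕ} (hn : n ≠ 0) (N : ℕ) :
    ∑ k ∈ range N, 1 / (2 * (k : ℝ) + 3) ^ (n + 1) ≤ 1 / (2 * n) := by
  set f : ℕ → ℝ := fun k => 1 / (2 * (k : ℝ) + 1) ^ n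
  have hterm (k : ℕ) : 1 / (2 * (k : ℝ) + 3) ^ (n + 1) ≤ 1 / (2 * n) * (f k - f (k + 1)) := by
    have hstep := natCast_mul_div_pow_succ_le_one_div_pow_sub (a := 2 * (k : ℝ) + 1) (h := 2)
      (by positivity) zero_le_two n
    simp only [f, Nat.cast_succ]
    rw [show 2 * ((k : ℝ) + 1) + 1 = 2 * k + 1 + 2 by ring,
      show 2 * (k : ℝ) + 3 = 2 * k + 1 + 2 by ring]
    calc 1 / (2 * (k : ℝ) + 1 + 2) ^ (n + 1)
        = 1 / (2 * n) * (n * 2 / (2 * k + 1 + 2) ^ (n + 1)) := by field_simp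
      _ ≤ 1 / (2 * n) * (1 / (2 * k + 1) ^ n - 1 / (2 * k + 1 + 2) ^ n) := by gcongr
  calc ∑ k ∈ range N, 1 / (2 * (k : ℝ) + 3) ^ (n + 1)
      ≤ ∑ k ∈ range N, 1 / (2 * n) * (f k - f (k + 1)) := sum_le_sum fun k _ => hterm k
    _ = 1 / (2 * n) * (1 - f N) := by rw [← mul_sum, sum_range_sub']; simp [f]
    _ ≤ 1 / (2 * n) := by
      have : 0 ≤ f N := by positivity
      have : (0 : ℝ) ≤ 1 / (2 * n) := by positivity
      nlinarith

lemma pow_succ_sub_pow_div_pow_add_le {x : ℝ} (hx : 2 ≤ x) (d m : ℕ) :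
    ((x + 1) ^ d - x ^ d) / (2 * x - 1) ^ (d + m) ≤ 1 / (2 * x - 1) ^ m := by
  have hpos : 0 < 2 * x - 1 := by linarith
  have hnum : (x + 1) ^ d - x ^ d ≤ (2 * x - 1) ^ d :=
    calc (x + 1) ^ d - x ^ d ≤ (x + 1) ^ d := sub_le_self _ (by positivity)
      _ ≤ (2 * x - 1) ^ d := pow_le_pow_left₀ (by linarith) (by linarith) d
  calc ((x + 1) ^ d - x ^ d) / (2 * x - 1) ^ (d + m)
      ≤ (2 * x - 1) ^ d / (2 * x - 1) ^ (d + m) :=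
        div_le_div_of_nonneg_right hnum (pow_nonneg hpos.le _)
    _ = 1 / (2 * x - 1) ^ m := by rw [pow_add]; field_simp

lemma tsum_pow_succ_sub_pow_div_le (d : ℕ) {n : ℕ} (hn : n ≠ 0) :
    ∑' l : ℕ, (((l : ℝ) + 2 + 1) ^ d - ((l : ℝ) + 2) ^ d)
        / (2 * ((l : ℝ) + 2) - 1) ^ (d + 1 + n) ≤ 1 / (2 * n) := by
  have hterm (l : ℕ) :
      (((l : ℝ) + 2 + 1) ^ d - ((l : ℝ) + 2) ^ d) / (2 * ((l : ℝ) + 2) - 1) ^ (d + 1 + n)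
        ≤ 1 / (2 * (l : ℝ) + 3) ^ (n + 1) := by
    rw [show d + 1 + n = d + (n + 1) by omega,
      show 2 * (l : ℝ) + 3 = 2 * ((l : ℝ) + 2) - 1 by ring]
    exact pow_succ_sub_pow_div_pow_add_le (le_add_of_nonneg_left l.cast_nonneg) d (n + 1)
  have hnonneg (l : ℕ) :
      0 ≤ (((l : ℝ) + 2 + 1) ^ d - ((l : ℝ) + 2) ^ d)
        / (2 * ((l : ℝ) + 2) - 1) ^ (d + 1 + n) := by
    have hl : (0 : ℝ) ≤ l := l.cast_nonneg
    exact div_nonneg (sub_nonneg.2 (pow_le_pow_left₀ (by positivity) (by linarith) d))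
      (pow_nonneg (by linarith) _)
  exact Real.tsum_le_of_sum_range_le hnonneg fun N =>
    (sum_le_sum fun l _ => hterm l).trans (sum_range_one_div_odd_pow_succ_le hn N)

theorem stmt_8_general (d p : ℕ) (hp : d + 2 ≤ p) :
    (2:ℝ) ^ d - 1 +
        (∑' l : ℕ, (((l:ℝ) + 2 + 1) ^ d - ((l:ℝ) + 2) ^ d) / (2 * ((l:ℝ) + 2) - 1) ^ p)
      ≤ (2:ℝ) ^ d - 1 + 1 / (2 * ((p:ℝ) - d - 1)) ∧
    (2:ℝ) ^ d - 1 + 1 / (2 * ((p:ℝ) - d - 1)) ≤ 2 ^ p := by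
  obtain ⟨n, hn, rfl⟩ : ∃ n, n ≠ 0 ∧ p = d + 1 + n := ⟨p - d - 1, by omega, by omega⟩
  have hpd : ((d + 1 + n : ℕ) : ℝ) - d - 1 = n := by push_cast; ring
  rw [hpd]
  refine ⟨by gcongr; exact tsum_pow_succ_sub_pow_div_le d hn, ?_⟩
  have h2n : 1 / (2 * (n : ℝ)) ≤ 1 := by
    rw [div_le_one (by positivity)]
    have : (1 : ℝ) ≤ n := by exact_mod_cast Nat.one_le_iff_ne_zero.2 hn
    linarith
  have h2d : (2 : ℝ) ^ d ≤ 2 ^ (d + 1 + n) := pow_le_pow_right₀ one_le_two (by omega)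
  linarith

/-- Key summation bound controlling aliasing error in Fourier interpolation. -/
theorem stmt_8 (d p : ℕ) (hd : 1 ≤ d) (hp : d + 2 ≤ p) :
    (2:ℝ) ^ d - 1 +
        (∑' l : ℕ, (((l:ℝ) + 2 + 1) ^ d - ((l:ℝ) + 2) ^ d) / (2 * ((l:ℝ) + 2) - 1) ^ p)
      ≤ (2:ℝ) ^ d - 1 + 1 / (2 * ((p:ℝ) - d - 1)) ∧
    (2:ℝ) ^ d - 1 + 1 / (2 * ((p:ℝ) - d - 1)) ≤ 2 ^ p :=
  stmt_8_general d p hp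
end

section
/- Let A₁ be Hermitian negative semidefinite and A₂ an arbitrary square matrix, h > 0. Then ‖∫₀ʰ∫₀ᵗ e^{A₁(h−t)} A₂ e^{A₁(t−s)} A₂ e^{A₁ s} ds dt − (h²/2) e^{A₁ h/2} A₂² e^{A₁ h/2}‖ ≤ (h³/4) ‖[A₂,A₁]‖ ‖A₂‖. -/
/-!
Write `g t s` for the integrand and `c = h / 2`, so that the subtracted term is `g c c` times the
area `h² / 2` of the simplex `0 ≤ s ≤ t ≤ h`. The three exponents of `g` add up to `h` and `A₁`
commutes with its exponentials, so the derivative of `g` along the segment from `(c, c)` to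
`(t, s)`, which stays in the simplex, is a sum of two terms, each a product of three contractions
`e^{x A₁}`, one `A₂` and one commutator `[A₂, A₁]`. Hence
`‖g t s - g c c‖ ≤ (|t - c| + |s - c|) ‖[A₂, A₁]‖ ‖A₂‖`, and this weight integrates to `h³ / 4`
over the simplex.
-/

open scoped Matrix.Norms.L2Operator ComplexOrder
open NormedSpace intervalIntegral

theorem integral_zero_abs (b : ℝ) : ∫ x in (0 : ℝ)..b, |x| = b * |b| / 2 := by
  rcases le_total 0 b with hb | hb
  · rw [integral_congr fun x hx => abs_of_nonneg (Set.uIcc_of_le hb ▸ hx).1, integral_id,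
      abs_of_nonneg hb]
    ring
  · rw [integral_congr (g := fun x => -x) fun x hx => abs_of_nonpos (Set.uIcc_of_ge hb ▸ hx).2,
      integral_neg, integral_id, abs_of_nonpos hb]
    ring

theorem integral_zero_mul_abs (b : ℝ) : ∫ x in (0 : ℝ)..b, x * |x| = |b| ^ 3 / 3 := by
  rcases le_total 0 b with hb | hb
  · rw [integral_congr (g := fun x => x ^ 2) fun x hx => by
        simp [abs_of_nonneg (Set.uIcc_of_le hb ▸ hx).1, sq], integral_pow, abs_of_nonneg hb]
    ring
  · rw [integral_congr (g := fun x => -x ^ 2) fun x hx => by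
        simp [abs_of_nonpos (Set.uIcc_of_ge hb ▸ hx).2, sq], integral_neg, integral_pow,
      abs_of_nonpos hb]
    ring

theorem integral_abs_sub (a b c : ℝ) :
    ∫ x in a..b, |x - c| = ((b - c) * |b - c| - (a - c) * |a - c|) / 2 := by
  rw [integral_comp_sub_right (fun x => |x|), ← integral_interval_sub_left (a := 0)
    (continuous_abs.intervalIntegrable _ _) (continuous_abs.intervalIntegrable _ _),
    integral_zero_abs, integral_zero_abs]
  ring

theorem integral_mul_abs_sub (a b c : ℝ) :
    ∫ x in a..b, (x - c) * |x - c| = (|b - c| ^ 3 - |a - c| ^ 3) / 3 := by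
  have hcont : Continuous fun x : ℝ => x * |x| := by fun_prop
  rw [integral_comp_sub_right (fun x => x * |x|), ← integral_interval_sub_left (a := 0)
    (hcont.intervalIntegrable _ _) (hcont.intervalIntegrable _ _), integral_zero_mul_abs,
    integral_zero_mul_abs]
  ring

theorem integral_integral_abs_sub_half {h : ℝ} (hh : 0 ≤ h) :
    ∫ t in (0 : ℝ)..h, ∫ s in (0 : ℝ)..t, (|t - h / 2| + |s - h / 2|) = h ^ 3 / 4 := by
  have hc : |h / 2| = h / 2 := abs_of_nonneg (by linarith)
  have inner : ∀ t, ∫ s in (0 : ℝ)..t, (|t - h / 2| + |s - h / 2|) =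
      3 / 2 * ((t - h / 2) * |t - h / 2|) + h / 2 * |t - h / 2| + h ^ 2 / 8 := fun t => by
    rw [integral_add, integral_const, integral_abs_sub, zero_sub, abs_neg, hc, smul_eq_mul]
    · ring
    all_goals exact Continuous.intervalIntegrable (by fun_prop) _ _
  simp_rw [inner]
  rw [integral_add, integral_add, integral_const_mul, integral_const_mul, integral_const,
    integral_mul_abs_sub, integral_abs_sub, zero_sub, abs_neg, show h - h / 2 = h / 2 by ring, hc,
    smul_eq_mul]
  · ring
  all_goals exact Continuous.intervalIntegrable (by fun_prop) _ _

section

variable {E : Type*} [NormedAddCommGroup E] [NormedSpace ℝ E]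

theorem norm_integral_integral_le {f : ℝ → ℝ → E} {B : ℝ → ℝ → ℝ} {h : ℝ} (hh : 0 ≤ h)
    (hB : Continuous (Function.uncurry B))
    (hfB : ∀ t s, 0 ≤ s → s ≤ t → t ≤ h → ‖f t s‖ ≤ B t s) :
    ‖∫ t in (0 : ℝ)..h, ∫ s in (0 : ℝ)..t, f t s‖ ≤
      ∫ t in (0 : ℝ)..h, ∫ s in (0 : ℝ)..t, B t s := by
  refine norm_integral_le_of_norm_le hh (Filter.Eventually.of_forall fun t ht => ?_)
    ((continuous_parametric_intervalIntegral_of_continuous hB continuous_id).intervalIntegrable _ _)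
  refine norm_integral_le_of_norm_le ht.1.le (Filter.Eventually.of_forall fun s hs => ?_)
    ((hB.uncurry_left t).intervalIntegrable _ _)
  exact hfB t s hs.1.le hs.2 ht.2

theorem integral_integral_sub_const [CompleteSpace E] {f : ℝ → ℝ → E}
    (hf : Continuous (Function.uncurry f)) (c : E) (h : ℝ) :
    ∫ t in (0 : ℝ)..h, ∫ s in (0 : ℝ)..t, (f t s - c) =
      (∫ t in (0 : ℝ)..h, ∫ s in (0 : ℝ)..t, f t s) - (h ^ 2 / 2) • c := by
  have inner : ∀ t, ∫ s in (0 : ℝ)..t, (f t s - c) = (∫ s in (0 : ℝ)..t, f t s) - t • c :=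
    fun t => by
      rw [integral_sub ((hf.uncurry_left t).intervalIntegrable _ _) intervalIntegrable_const,
        integral_const, sub_zero]
  simp_rw [inner]
  rw [integral_sub (f := fun t => ∫ s in (0 : ℝ)..t, f t s) (g := fun t => t • c)
    ((continuous_parametric_intervalIntegral_of_continuous hf continuous_id).intervalIntegrable _ _)
    ((continuous_id.smul continuous_const).intervalIntegrable _ _),
    intervalIntegral.integral_smul_const, integral_id]
  norm_num

end

theorem norm_exp_le_one_of_nonpos {A : Type*} [CStarAlgebra A] [PartialOrder A]
    [StarOrderedRing A] {a : A} (ha : a ≤ 0) : ‖exp a‖ ≤ 1 := by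
  have hsa : IsSelfAdjoint a := by simpa using (IsSelfAdjoint.of_nonneg (neg_nonneg.2 ha)).neg
  rw [← CFC.real_exp_eq_normedSpace_exp]
  refine norm_cfc_le zero_le_one fun x hx => ?_
  have : 0 ≤ -x :=
    spectrum_nonneg_of_nonneg (neg_nonneg.2 ha) (by rwa [← spectrum.neg_eq, Set.neg_mem_neg])
  rw [Real.norm_eq_abs, abs_of_pos (Real.exp_pos x), Real.exp_le_one_iff]
  linarith

open scoped MatrixOrder in
theorem Matrix.norm_exp_smul_le_one_of_posSemidef_neg {n : Type*} [Fintype n] [DecidableEq n]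
    {A : Matrix n n ℂ} (hA : (-A).PosSemidef) {x : ℝ} (hx : 0 ≤ x) : ‖exp (x • A)‖ ≤ 1 := by
  refine norm_exp_le_one_of_nonpos ?_
  rw [← neg_nonneg, ← smul_neg]
  exact smul_nonneg hx (Matrix.nonneg_iff_posSemidef.2 hA)

section

variable {𝔸 : Type*} [NormedRing 𝔸]

theorem norm_mul_mul_mul_mul_le_of_norm_le_one {p q r : 𝔸} (x y : 𝔸) (hp : ‖p‖ ≤ 1)
    (hq : ‖q‖ ≤ 1) (hr : ‖r‖ ≤ 1) : ‖p * x * q * y * r‖ ≤ ‖x‖ * ‖y‖ := by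
  simpa using norm_mul_le_of_le (norm_mul_le_of_le (norm_mul_le_of_le
    (norm_mul_le_of_le hp le_rfl) hq) le_rfl) hr

variable [NormedAlgebra ℝ 𝔸] [CompleteSpace 𝔸]

theorem HasDerivAt.exp_smul_const {f : ℝ → ℝ} {f' u : ℝ} (a : 𝔸) (hf : HasDerivAt f f' u) :
    HasDerivAt (fun u => NormedSpace.exp (f u • a)) (f' • (NormedSpace.exp (f u • a) * a)) u :=
  (hasDerivAt_exp_smul_const a (f u)).scomp u hf

@[fun_prop]
theorem Continuous.exp_smul_const {X : Type*} [TopologicalSpace X] {f : X → ℝ} (a : 𝔸)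
    (hf : Continuous f) : Continuous fun x => NormedSpace.exp (f x • a) :=
  (differentiable_exp_smul_const ℝ a).continuous.comp hf

noncomputable def trotterIntegrand (a b : 𝔸) (h t s : ℝ) : 𝔸 :=
  exp ((h - t) • a) * b * exp ((t - s) • a) * b * exp (s • a)

variable (a b : 𝔸) (h : ℝ)

theorem continuous_trotterIntegrand : Continuous (Function.uncurry (trotterIntegrand a b h)) := by
  unfold trotterIntegrand
  fun_prop

theorem hasDerivAt_trotterIntegrand_comp {τ σ : ℝ → ℝ} {τ' σ' u : ℝ} (hτ : HasDerivAt τ τ' u)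
    (hσ : HasDerivAt σ σ' u) :
    HasDerivAt (fun u => trotterIntegrand a b h (τ u) (σ u))
      (τ' • (exp ((h - τ u) • a) * ⁅b, a⁆ * exp ((τ u - σ u) • a) * b * exp (σ u • a)) +
        σ' • (exp ((h - τ u) • a) * b * exp ((τ u - σ u) • a) * ⁅b, a⁆ * exp (σ u • a))) u := by
  have hE₁ := (hτ.const_sub h).exp_smul_const a
  have hE₂ := (hτ.sub hσ).exp_smul_const a
  have hE₃ := hσ.exp_smul_const a
  refine HasDerivAt.congr_deriv ((((hE₁.mul_const b).mul hE₂).mul_const b).mul hE₃) ?_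
  have hcomm : ∀ x : ℝ, a * exp (x • a) = exp (x • a) * a := fun x =>
    ((Commute.refl a).smul_right x).exp_right.eq
  simp only [Pi.mul_apply, Pi.sub_apply, Ring.lie_def, smul_mul_assoc, mul_smul_comm, mul_sub,
    sub_mul, add_mul, mul_assoc, hcomm]
  module

theorem norm_trotterIntegrand_sub_le (hexp : ∀ x : ℝ, 0 ≤ x → ‖exp (x • a)‖ ≤ 1)
    {t s t₀ s₀ : ℝ} (hs : 0 ≤ s) (hst : s ≤ t) (hth : t ≤ h) (hs₀ : 0 ≤ s₀) (hst₀ : s₀ ≤ t₀)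
    (hth₀ : t₀ ≤ h) :
    ‖trotterIntegrand a b h t s - trotterIntegrand a b h t₀ s₀‖ ≤
      (|t - t₀| + |s - s₀|) * (‖⁅b, a⁆‖ * ‖b‖) := by
  let τ : ℝ → ℝ := fun u => t₀ + u * (t - t₀)
  let σ : ℝ → ℝ := fun u => s₀ + u * (s - s₀)
  have hτ : ∀ u, HasDerivAt τ (t - t₀) u := fun u =>
    (((hasDerivAt_id u).mul_const (t - t₀)).const_add t₀).congr_deriv (one_mul _)
  have hσ : ∀ u, HasDerivAt σ (s - s₀) u := fun u =>
    (((hasDerivAt_id u).mul_const (s - s₀)).const_add s₀).congr_deriv (one_mul _)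
  have hsegment : ∀ u ∈ Set.Ico (0 : ℝ) 1, 0 ≤ σ u ∧ σ u ≤ τ u ∧ τ u ≤ h := by
    rintro u ⟨hu₀, hu₁⟩
    refine ⟨?_, ?_, ?_⟩ <;> nlinarith
  have hmean := norm_image_sub_le_of_norm_deriv_le_segment_01'
    (C := (|t - t₀| + |s - s₀|) * (‖⁅b, a⁆‖ * ‖b‖))
    (fun u _ => (hasDerivAt_trotterIntegrand_comp a b h (hτ u) (hσ u)).hasDerivWithinAt) ?_
  · simpa [τ, σ] using hmean
  intro u hu
  obtain ⟨hσ₀, hστ, hτh⟩ := hsegment u hu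
  have h₁ := hexp _ (sub_nonneg.2 hτh)
  have h₂ := hexp _ (sub_nonneg.2 hστ)
  have h₃ := hexp _ hσ₀
  refine (norm_add_le _ _).trans ?_
  rw [norm_smul, norm_smul, Real.norm_eq_abs, Real.norm_eq_abs, add_mul]
  gcongr
  · exact norm_mul_mul_mul_mul_le_of_norm_le_one _ _ h₁ h₂ h₃
  · exact (norm_mul_mul_mul_mul_le_of_norm_le_one _ _ h₁ h₂ h₃).trans_eq (mul_comm _ _)

end

theorem stmt_10_general {n : Type*} [Fintype n] [DecidableEq n]
    (A₁ A₂ : Matrix n n ℂ) (hA₁neg : (-A₁).PosSemidef)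
    (h : ℝ) (hh : 0 < h) :
    ‖(∫ t in (0:ℝ)..h, ∫ s in (0:ℝ)..t,
          exp ((h - t) • A₁) * A₂ * exp ((t - s) • A₁) * A₂ * exp (s • A₁))
        - (h ^ 2 / 2) • (exp ((h/2) • A₁) * A₂ ^ 2 * exp ((h/2) • A₁))‖ ≤
      h ^ 3 / 4 * ‖A₂ * A₁ - A₁ * A₂‖ * ‖A₂‖ := by
  have hmid : exp ((h / 2) • A₁) * A₂ ^ 2 * exp ((h / 2) • A₁) =
      trotterIntegrand A₁ A₂ h (h / 2) (h / 2) := by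
    rw [trotterIntegrand, sub_self, zero_smul, exp_zero, mul_one, sq, ← mul_assoc,
      show h - h / 2 = h / 2 by ring]
  change ‖(∫ t in (0:ℝ)..h, ∫ s in (0:ℝ)..t, trotterIntegrand A₁ A₂ h t s) - _‖ ≤ _
  rw [hmid, ← integral_integral_sub_const (continuous_trotterIntegrand A₁ A₂ h)]
  calc _ ≤ ∫ t in (0:ℝ)..h, ∫ s in (0:ℝ)..t, (|t - h / 2| + |s - h / 2|) * (‖⁅A₂, A₁⁆‖ * ‖A₂‖) :=
        norm_integral_integral_le hh.le (by fun_prop) fun t s hs hst hth =>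
          norm_trotterIntegrand_sub_le A₁ A₂ h
            (fun _ hx => Matrix.norm_exp_smul_le_one_of_posSemidef_neg hA₁neg hx)
            hs hst hth (by positivity) le_rfl (by linarith)
    _ = h ^ 3 / 4 * ‖A₂ * A₁ - A₁ * A₂‖ * ‖A₂‖ := by
      simp_rw [integral_mul_const]
      rw [integral_integral_abs_sub_half hh.le, Ring.lie_def]
      ring

/-- Midpoint-rule commutator bound for the second-order term in the Trotter expansion. -/
theorem stmt_10 {n : Type*} [Fintype n] [DecidableEq n]
    (A₁ A₂ : Matrix n n ℂ) (hA₁ : A₁.IsHermitian) (hA₁neg : (-A₁).PosSemidef)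
    (h : ℝ) (hh : 0 < h) :
    ‖(∫ t in (0:ℝ)..h, ∫ s in (0:ℝ)..t,
          exp ((h - t) • A₁) * A₂ * exp ((t - s) • A₁) * A₂ * exp (s • A₁))
        - (h ^ 2 / 2) • (exp ((h/2) • A₁) * A₂ ^ 2 * exp ((h/2) • A₁))‖ ≤
      h ^ 3 / 4 * ‖A₂ * A₁ - A₁ * A₂‖ * ‖A₂‖ :=
  stmt_10_general A₁ A₂ hA₁neg h hh
end
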